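/- arXiv:nlin/0311058 — 4 statements merged into one kernel-verified Lean document; each statement's English description precedes it below -/
import Mathlib

section
/- Let b₀, C₀ ∈ ℝ with b₀ ≠ 0, and let Y(z) = (b₀/10)·tanh(b₀z/10 + φ₀). Then y(z) = 3b₀²/25 + C₀ - (12/5)b₀Y(z) - 12Y(z)² satisfies the travelling-wave Korteweg–de Vries–Burgers equation y'' + (1/2)y² - b₀y' - C₀y - 18b₀⁴/625 + C₀²/2 = 0 on ℝ. -/
/-!
With `κ = b₀ / 10`, the function `Y` solves the Riccati equation `Y' = κ² - Y²`. Hence every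
derivative of a polynomial in `Y` is again a polynomial in `Y`, and the KdV–Burgers equation
for `y = A + B Y + D Y²` collapses to a polynomial identity in `Y`, `b₀` and `C₀`.
-/

open Real

theorem Real.hasDerivAt_tanh (x : ℝ) : HasDerivAt tanh (1 - tanh x ^ 2) x := by
  have hcosh : cosh x ≠ 0 := (cosh_pos x).ne'
  have h := (hasDerivAt_sinh x).div (hasDerivAt_cosh x) hcosh
  rw [show sinh / cosh = tanh from funext fun y => (tanh_eq_sinh_div_cosh y).symm] at h
  refine h.congr_deriv ?_
  rw [tanh_eq_sinh_div_cosh]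
  field_simp

theorem hasDerivAt_mul_tanh_mul_add (κ φ z : ℝ) :
    HasDerivAt (fun z => κ * tanh (κ * z + φ)) (κ ^ 2 - (κ * tanh (κ * z + φ)) ^ 2) z := by
  have hlin : HasDerivAt (fun z => κ * z + φ) κ z := by
    simpa using ((hasDerivAt_id z).const_mul κ).add_const φ
  refine (((hasDerivAt_tanh (κ * z + φ)).comp z hlin).const_mul κ).congr_deriv ?_
  ring

section Riccati

variable {Y : ℝ → ℝ} {κ : ℝ}

theorem deriv_quadratic_of_riccati (hY : ∀ z, HasDerivAt Y (κ ^ 2 - Y z ^ 2) z) (A B D : ℝ) :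
    deriv (fun z => A + B * Y z + D * Y z ^ 2) =
      fun z => (B + 2 * D * Y z) * (κ ^ 2 - Y z ^ 2) := by
  funext z
  refine HasDerivAt.deriv ?_
  refine ((((hY z).const_mul B).const_add A).fun_add
    (((hY z).fun_pow 2).const_mul D)).congr_deriv ?_
  push_cast
  ring

theorem deriv_deriv_quadratic_of_riccati (hY : ∀ z, HasDerivAt Y (κ ^ 2 - Y z ^ 2) z)
    (A B D z : ℝ) :
    deriv (deriv fun z => A + B * Y z + D * Y z ^ 2) z =
      (2 * D * (κ ^ 2 - Y z ^ 2) - 2 * Y z * (B + 2 * D * Y z)) * (κ ^ 2 - Y z ^ 2) := by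
  rw [deriv_quadratic_of_riccati hY]
  refine HasDerivAt.deriv ?_
  refine ((((hY z).const_mul (2 * D)).const_add B).fun_mul
    (((hY z).fun_pow 2).const_sub (κ ^ 2))).congr_deriv ?_
  push_cast
  ring

end Riccati

theorem kdv_burgers_exact_solution_general (b₀ C₀ φ₀ : ℝ)
    (Y : ℝ → ℝ) (hYdef : Y = fun z => (b₀ / 10) * Real.tanh (b₀ * z / 10 + φ₀))
    (y : ℝ → ℝ)
    (hydef : y = fun z => 3 * b₀ ^ 2 / 25 + C₀ - (12 / 5) * b₀ * Y z - 12 * (Y z) ^ 2) :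
    ∀ z : ℝ,
      deriv (deriv y) z + (1 / 2) * (y z) ^ 2 - b₀ * deriv y z - C₀ * y z
        - 18 * b₀ ^ 4 / 625 + C₀ ^ 2 / 2 = 0 := by
  have hY : ∀ z, HasDerivAt Y ((b₀ / 10) ^ 2 - Y z ^ 2) z := by
    have hYκ : Y = fun z => b₀ / 10 * tanh (b₀ / 10 * z + φ₀) := by
      rw [hYdef]; funext z; ring_nf
    rw [hYκ]
    exact hasDerivAt_mul_tanh_mul_add (b₀ / 10) φ₀
  have hy : y = fun z =>
      (3 * b₀ ^ 2 / 25 + C₀) + (-(12 / 5) * b₀) * Y z + (-12) * Y z ^ 2 := by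
    rw [hydef]; funext z; ring
  intro z
  rw [hy, deriv_deriv_quadratic_of_riccati hY, deriv_quadratic_of_riccati hY]
  ring

/-- Exact solution of the travelling-wave KdV–Burgers equation. -/
theorem kdv_burgers_exact_solution (b₀ C₀ φ₀ : ℝ) (hb : b₀ ≠ 0)
    (Y : ℝ → ℝ) (hYdef : Y = fun z => (b₀ / 10) * Real.tanh (b₀ * z / 10 + φ₀))
    (y : ℝ → ℝ)
    (hydef : y = fun z => 3 * b₀ ^ 2 / 25 + C₀ - (12 / 5) * b₀ * Y z - 12 * (Y z) ^ 2) :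
    ∀ z : ℝ,
      deriv (deriv y) z + (1 / 2) * (y z) ^ 2 - b₀ * deriv y z - C₀ * y z
        - 18 * b₀ ^ 4 / 625 + C₀ ^ 2 / 2 = 0 :=
  kdv_burgers_exact_solution_general b₀ C₀ φ₀ Y hYdef y hydef
end

section
/- Suppose Y : ℝ → ℝ satisfies Y' = -Y² + α. Then y = Y satisfies the fifth-order modified KdV travelling-wave equation y'''' - 10y²y'' - 10y(y')² + 6y⁵ - 6α²y = 0. -/
/-!
Along a solution of the autonomous equation `y' = p(y)` the chain rule gives
`(q(y))' = (q' p)(y)`, so every derivative of `y` is a polynomial in `y`, obtained by iterating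
the Lie derivative `q ↦ q' p` on `X`. For the Riccati field `p = α - X²` this gives
`y'' = 2y³ - 2αy` and `y'''' = 24y⁵ - 40αy³ + 16α²y`, and the mKdV expression becomes the zero
polynomial in `y`.
-/

open Polynomial

namespace Polynomial

noncomputable def lieDeriv (p q : ℝ[X]) : ℝ[X] := derivative q * p

end Polynomial

section AutonomousODE

variable {Y : ℝ → ℝ} {p : ℝ[X]}

theorem hasDerivAt_eval_comp_of_autonomous (hY : ∀ z, HasDerivAt Y (p.eval (Y z)) z)
    (q : ℝ[X]) (z : ℝ) :
    HasDerivAt (fun z => q.eval (Y z)) ((lieDeriv p q).eval (Y z)) z := by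
  rw [lieDeriv, eval_mul]
  exact (q.hasDerivAt (Y z)).comp z (hY z)

theorem iterate_deriv_eq_eval_of_autonomous (hY : ∀ z, HasDerivAt Y (p.eval (Y z)) z) (n : ℕ) :
    deriv^[n] Y = fun z => ((lieDeriv p)^[n] X).eval (Y z) := by
  induction n with
  | zero => simp
  | succ n ih =>
    rw [Function.iterate_succ_apply', ih, Function.iterate_succ_apply']
    exact funext fun z => (hasDerivAt_eval_comp_of_autonomous hY _ z).deriv

end AutonomousODE

/-- A Riccati solution solves the fifth-order modified KdV travelling-wave equation
`y'''' - 10y²y'' - 10y(y')² + 6y⁵ - 6α²y = 0`. -/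
theorem riccati_solves_mkdv5 (Y : ℝ → ℝ) (α : ℝ)
    (hY : Differentiable ℝ Y)
    (hRic : ∀ z, deriv Y z = -(Y z) ^ 2 + α) :
    ∀ z, deriv (deriv (deriv (deriv Y))) z
      - 10 * (Y z) ^ 2 * deriv (deriv Y) z
      - 10 * Y z * (deriv Y z) ^ 2
      + 6 * (Y z) ^ 5 - 6 * α ^ 2 * Y z = 0 := by
  have hODE : ∀ z, HasDerivAt Y ((-X ^ 2 + C α).eval (Y z)) z := fun z => by
    simpa [hRic] using (hY z).hasDerivAt
  have hderiv := iterate_deriv_eq_eval_of_autonomous hODE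
  intro z
  have h1 := congrFun (hderiv 1) z
  have h2 := congrFun (hderiv 2) z
  have h4 := congrFun (hderiv 4) z
  simp only [Function.iterate_succ_apply', Function.iterate_zero_apply] at h1 h2 h4
  rw [h1, h2, h4]
  simp only [lieDeriv, derivative_X, one_mul, derivative_neg, derivative_X_pow_succ,
    Nat.cast_one, map_add, map_one, pow_one, derivative_C, add_zero, neg_mul, derivative_mul,
    derivative_one, zero_mul, mul_one, zero_add, mul_neg, neg_add_rev, neg_neg, eval_mul, eval_add,
    eval_one, eval_X, eval_neg, eval_pow, eval_C, sub_neg_eq_add]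
  ring
end

section
/- Suppose Y : ℝ → ℝ satisfies Y' = -Y² + α. Then y = Y satisfies the Fordy–Gibbons travelling-wave equation y'''' - 5y²y'' + 5y'y'' - 5y(y')² + y⁵ - α²y = 0. -/
/-!
If `Y' = P(Y)` for a polynomial `P`, the chain rule gives `(Q ∘ Y)' = (Q' P) ∘ Y` for every
polynomial `Q`, so every derivative of `Y` is a polynomial in `Y`. For `P = α - X²` these are
`Y'' = 2Y³ - 2αY` and `Y'''' = (16αY - 24Y³)(α - Y²)`, and substituting them turns the
Fordy–Gibbons expression into a polynomial identity in `Y` and `α`.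
-/

open Polynomial

namespace Polynomial

variable {𝕜 : Type*} [NontriviallyNormedField 𝕜]

noncomputable def derivAlong (P Q : 𝕜[X]) : 𝕜[X] := derivative Q * P

theorem deriv_eval_comp_of_hasDerivAt {Y : 𝕜 → 𝕜} {P : 𝕜[X]}
    (hY : ∀ z, HasDerivAt Y (P.eval (Y z)) z) (Q : 𝕜[X]) :
    deriv (fun z => Q.eval (Y z)) = fun z => (derivAlong P Q).eval (Y z) := by
  funext z
  exact ((Q.hasDerivAt (Y z)).comp z (hY z)).deriv.trans (eval_mul ..).symm

theorem iterate_deriv_eq_eval_iterate_derivAlong {Y : 𝕜 → 𝕜} {P : 𝕜[X]}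
    (hY : ∀ z, HasDerivAt Y (P.eval (Y z)) z) (n : ℕ) :
    deriv^[n] Y = fun z => ((derivAlong P)^[n] X).eval (Y z) := by
  induction n with
  | zero => simp
  | succ n ih =>
    rw [Function.iterate_succ_apply', ih, deriv_eval_comp_of_hasDerivAt hY,
      Function.iterate_succ_apply']

end Polynomial

/-- A Riccati solution solves the Fordy–Gibbons travelling-wave equation
`y'''' - 5y²y'' + 5y'y'' - 5y(y')² + y⁵ - α²y = 0`. -/
theorem riccati_solves_fordy_gibbons (Y : ℝ → ℝ) (α : ℝ)
    (hY : Differentiable ℝ Y)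
    (hRic : ∀ z, deriv Y z = -(Y z) ^ 2 + α) :
    ∀ z, deriv (deriv (deriv (deriv Y))) z
      - 5 * (Y z) ^ 2 * deriv (deriv Y) z
      + 5 * deriv Y z * deriv (deriv Y) z
      - 5 * Y z * (deriv Y z) ^ 2
      + (Y z) ^ 5 - α ^ 2 * Y z = 0 := by
  have hflow : ∀ z, HasDerivAt Y ((-X ^ 2 + C α : ℝ[X]).eval (Y z)) z := fun z => by
    simpa only [eval_add, eval_neg, eval_pow, eval_X, eval_C, hRic] using (hY z).hasDerivAt
  have hiter := iterate_deriv_eq_eval_iterate_derivAlong hflow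
  intro z
  have h1 := congrFun (hiter 1) z
  have h2 := congrFun (hiter 2) z
  have h4 := congrFun (hiter 4) z
  simp only [Function.iterate_succ, Function.iterate_zero, Function.comp_apply, id] at h1 h2 h4
  rw [h1, h2, h4]
  simp only [derivAlong, derivative_mul, derivative_add, derivative_neg, derivative_X_pow,
    derivative_X, derivative_C, derivative_one, derivative_zero, eval_mul, eval_add, eval_neg,
    eval_pow, eval_X, eval_C, eval_one, eval_zero]
  ring
end

section
/- Suppose Y : ℝ → ℝ satisfies Y' = -Y² + α. Then y = Y² - 2α/3 satisfies the Schwarz–Kaup–Kupershmidt travelling-wave equation y'''' - 18yy'' + 24y³ - 9(y')² - 8α³/9 = 0. -/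
/-!
Along a solution of `Y' = α - Y²`, the chain rule turns `d/dz` on polynomials in `Y` into the
derivation `p ↦ p' · (α - X²)` of `ℝ[X]`. Hence `y = Y² - 2α/3` and all its derivatives are
polynomials in `Y`, and the Schwarz–Kaup–Kupershmidt expression becomes a polynomial in `Y`
which vanishes identically.
-/

open Polynomial

noncomputable def riccatiDerivation (α : ℝ) (p : ℝ[X]) : ℝ[X] := derivative p * (C α - X ^ 2)

section

variable {Y : ℝ → ℝ} {α : ℝ}

theorem hasDerivAt_eval_comp_of_riccati (hY : Differentiable ℝ Y)
    (hRic : ∀ z, deriv Y z = -(Y z) ^ 2 + α) (p : ℝ[X]) (z : ℝ) :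
    HasDerivAt (fun z => p.eval (Y z)) ((riccatiDerivation α p).eval (Y z)) z := by
  have hYz : HasDerivAt Y (-(Y z) ^ 2 + α) z := hRic z ▸ (hY z).hasDerivAt
  refine ((p.hasDerivAt (Y z)).comp z hYz).congr_deriv ?_
  simp only [riccatiDerivation, eval_mul, eval_sub, eval_C, eval_pow, eval_X]
  ring

theorem iterate_deriv_eval_comp_of_riccati (hY : Differentiable ℝ Y)
    (hRic : ∀ z, deriv Y z = -(Y z) ^ 2 + α) (n : ℕ) (p : ℝ[X]) :
    deriv^[n] (fun z => p.eval (Y z)) = fun z => ((riccatiDerivation α)^[n] p).eval (Y z) := by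
  induction n generalizing p with
  | zero => rfl
  | succ n ih =>
    have hp : deriv (fun z => p.eval (Y z)) = fun z => (riccatiDerivation α p).eval (Y z) :=
      funext fun z => (hasDerivAt_eval_comp_of_riccati hY hRic p z).deriv
    rw [Function.iterate_succ_apply, hp, ih, Function.iterate_succ_apply]

end

/-- If `Y` solves the Riccati equation, then `y = Y² - 2α/3` solves the
Schwarz–Kaup–Kupershmidt travelling-wave equation
`y'''' - 18yy'' + 24y³ - 9(y')² - 8α³/9 = 0`. -/
theorem riccati_solves_skk (Y : ℝ → ℝ) (α : ℝ)
    (hY : Differentiable ℝ Y)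
    (hRic : ∀ z, deriv Y z = -(Y z) ^ 2 + α)
    (y : ℝ → ℝ) (hydef : y = fun z => (Y z) ^ 2 - 2 * α / 3) :
    ∀ z, deriv (deriv (deriv (deriv y))) z
      - 18 * y z * deriv (deriv y) z
      + 24 * (y z) ^ 3
      - 9 * (deriv y z) ^ 2 - 8 * α ^ 3 / 9 = 0 := by
  intro z
  have hy : y = fun z => (X ^ 2 - C (2 * α / 3)).eval (Y z) := by simp [hydef]
  show deriv^[4] y z - 18 * y z * deriv^[2] y z + 24 * y z ^ 3
    - 9 * (deriv^[1] y z) ^ 2 - 8 * α ^ 3 / 9 = 0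
  simp only [hy, iterate_deriv_eval_comp_of_riccati hY hRic]
  simp only [Function.iterate_succ_apply', Function.iterate_zero_apply, riccatiDerivation,
    derivative_sub, derivative_mul, derivative_X_pow_succ, derivative_X, derivative_C,
    derivative_one, Nat.cast_one, map_add, map_one, pow_one, sub_zero, add_zero, zero_add,
    zero_sub, zero_mul, mul_zero, mul_one, mul_neg, derivative_neg, neg_add_rev,
    eval_mul, eval_add, eval_neg, eval_one, eval_sub, eval_C, eval_pow, eval_X]
  ring
end
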